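/- Let B_i be a middle block of a strongly irreducible ordering (the intersection of pinch convex sets A_{m_{i+1}} and V \ A_{m_i}), and let B_i = B⁰_i ⊇ B¹_i ⊇ ⋯ ⊇ B^ℓ_i = B′_i be the sequence obtained by repeatedly removing a vertex of maximal nonnegative slope. If B′_i is non-empty, then B′_i is a pinch cluster. -/

import Mathlib

open Finset

variable {V : Type*} [Fintype V] [DecidableEq V]

/-- The total weight of the boundary of `A`: the sum of the weights of the
edges with exactly one endpoint in `A`. -/
def boundarySize (w : V → V → ℝ) (A : Finset V) : ℝ :=
  ∑ u ∈ A, ∑ x ∈ Aᶜ, w u x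

/-- The pinchSlope of a vertex `v` with respect to a vertex set `A`: the total
weight of the edges from `v` to the complement of `A` minus the total weight
of the edges from `v` to `A`. -/
def pinchSlope (w : V → V → ℝ) (A : Finset V) (v : V) : ℝ :=
  ∑ x ∈ Aᶜ, w v x - ∑ x ∈ A, w v x

/-- `A` is pinch convex: for any sequence of vertices outside of `A`, if adding
all of them to `A` strictly decreases the boundary, then adding some proper
initial segment strictly increases the boundary. -/
def PinchConvex (w : V → V → ℝ) (A : Finset V) : Prop :=
  ∀ L : List V, (∀ x ∈ L, x ∉ A) →
    boundarySize w (A ∪ L.toFinset) < boundarySize w A →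
    ∃ k < L.length, boundarySize w A < boundarySize w (A ∪ (L.take k).toFinset)

/-- `A` is pinch concave: for any sequence of vertices of `A`, if removing
all of them from `A` strictly decreases the boundary, then removing some proper
initial segment strictly increases the boundary. -/
def PinchConcave (w : V → V → ℝ) (A : Finset V) : Prop :=
  ∀ L : List V, (∀ x ∈ L, x ∈ A) →
    boundarySize w (A \ L.toFinset) < boundarySize w A →
    ∃ k < L.length, boundarySize w A < boundarySize w (A \ (L.take k).toFinset)

/-- `A` is a pinch cluster: whenever adding a sequence of vertices to `A`, or
removing a sequence of vertices from `A`, strictly decreases the boundary, some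
proper initial segment of the sequence strictly increases the boundary. -/
def PinchCluster (w : V → V → ℝ) (A : Finset V) : Prop :=
  (∀ L : List V,
    boundarySize w (A ∪ L.toFinset) < boundarySize w A →
    ∃ k < L.length, boundarySize w A < boundarySize w (A ∪ (L.take k).toFinset)) ∧
  (∀ L : List V,
    boundarySize w (A \ L.toFinset) < boundarySize w A →
    ∃ k < L.length, boundarySize w A < boundarySize w (A \ (L.take k).toFinset))

/-! The boundary is submodular: adding a vertex changes it by the vertex's slope in the
enlarged set, and slopes only decrease as the set grows. Pinch convexity is equivalent to the
same condition for chains through arbitrary vertices, since vertices already in the set change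
nothing. Removing a vertex `v` of nonnegative slope from a pinch convex `A` preserves convexity,
because every `S` raises the boundary of `A \ {v}` at least as much as that of `A`. For
`C₁ ∩ C₂`, a shortest descending chain keeps the boundary level until its last vertex, which
misses some `Cᵢ`, and along such a chain `Cᵢ` gains no more than `C₁ ∩ C₂`, contradicting the
pinch convexity of `Cᵢ`. Concavity of the final set is immediate: every vertex has negative
slope, so the first removal from it in any chain raises the boundary. -/

namespace List

theorem exists_lt_length_take_filter_eq {α : Type*} (p : α → Bool) :
    ∀ (L : List α) {m : ℕ}, m < (L.filter p).length →
      ∃ k < L.length, (L.filter p).take m = (L.take k).filter p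
  | [], _, hm => absurd hm (Nat.not_lt_zero _)
  | a :: l, m, hm => by
    by_cases hpa : p a
    · rw [filter_cons_of_pos hpa] at hm ⊢
      cases m with
      | zero => exact ⟨0, by simp, by simp⟩
      | succ m =>
        obtain ⟨k, hk, heq⟩ := exists_lt_length_take_filter_eq p l (Nat.lt_of_succ_lt_succ hm)
        exact ⟨k + 1, by simpa using hk, by simp [filter_cons_of_pos hpa, heq]⟩
    · rw [filter_cons_of_neg hpa] at hm ⊢
      obtain ⟨k, hk, heq⟩ := exists_lt_length_take_filter_eq p l hm
      exact ⟨k + 1, by simpa using hk, by simp [filter_cons_of_neg hpa, heq]⟩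

theorem toFinset_take_succ {α : Type*} [DecidableEq α] {L : List α} {k : ℕ}
    (hk : k < L.length) : (L.take (k + 1)).toFinset = insert L[k] (L.take k).toFinset := by
  rw [take_succ_eq_append_getElem hk, toFinset_append, Finset.union_comm]
  simp

end List

section Boundary

variable {w : V → V → ℝ} {A C : Finset V} {v : V}

theorem pinchSlope_antitone (hw0 : ∀ u v, 0 ≤ w u v) (hAC : A ⊆ C) (v : V) :
    pinchSlope w C v ≤ pinchSlope w A v :=
  sub_le_sub
    (sum_le_sum_of_subset_of_nonneg (compl_subset_compl.mpr hAC) fun x _ _ => hw0 v x)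
    (sum_le_sum_of_subset_of_nonneg hAC fun x _ _ => hw0 v x)

theorem boundarySize_insert (hsym : ∀ u v, w u v = w v u) (hdiag : ∀ v, w v v = 0)
    (hv : v ∉ A) :
    boundarySize w (insert v A) = boundarySize w A + pinchSlope w (insert v A) v := by
  have hvc : v ∈ Aᶜ := mem_compl.mpr hv
  have hin : ∑ u ∈ A, w u v = ∑ u ∈ A, w v u := sum_congr rfl fun u _ => hsym u v
  unfold boundarySize pinchSlope
  rw [sum_insert hv, compl_insert, sum_erase_eq_sub hvc,
    sum_congr rfl fun u _ => sum_erase_eq_sub (f := fun x => w u x) hvc,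
    sum_sub_distrib, sum_insert hv, hdiag v, hin]
  ring

theorem boundarySize_erase (hsym : ∀ u v, w u v = w v u) (hdiag : ∀ v, w v v = 0)
    (hv : v ∈ A) : boundarySize w (A.erase v) = boundarySize w A - pinchSlope w A v := by
  have h := boundarySize_insert hsym hdiag (notMem_erase v A)
  rw [insert_erase hv] at h
  linarith

theorem boundarySize_insert_sub_le (hw0 : ∀ u v, 0 ≤ w u v) (hsym : ∀ u v, w u v = w v u)
    (hdiag : ∀ v, w v v = 0) (hAC : A ⊆ C) (hv : v ∉ C) :
    boundarySize w (insert v C) - boundarySize w C ≤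
      boundarySize w (insert v A) - boundarySize w A := by
  rw [boundarySize_insert hsym hdiag hv, boundarySize_insert hsym hdiag fun h => hv (hAC h)]
  linarith [pinchSlope_antitone hw0 (insert_subset_insert v hAC) v]

end Boundary

section Convexity

variable {w : V → V → ℝ} {A A' : Finset V}

theorem pinchConvex_iff_exists_take : PinchConvex w A ↔ ∀ L : List V,
    boundarySize w (A ∪ L.toFinset) < boundarySize w A →
    ∃ k < L.length, boundarySize w A < boundarySize w (A ∪ (L.take k).toFinset) := by
  refine ⟨fun hA L hL => ?_, fun h L _ => h L⟩
  set p : V → Bool := fun x => decide (x ∉ A)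
  have hunion : ∀ l : List V, A ∪ (l.filter p).toFinset = A ∪ l.toFinset := by
    intro l
    ext x
    by_cases hx : x ∈ A <;> simp [p, hx]
  obtain ⟨m, hm, hgt⟩ :=
    hA (L.filter p) (fun x hx => by simpa [p] using (List.mem_filter.mp hx).2)
      (by rwa [hunion])
  obtain ⟨k, hk, heq⟩ := List.exists_lt_length_take_filter_eq p L hm
  exact ⟨k, hk, by rwa [heq, hunion] at hgt⟩

theorem PinchConvex.of_boundarySize_union_sub_le (hA : PinchConvex w A)
    (hgain : ∀ S, boundarySize w (A ∪ S) - boundarySize w A ≤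
      boundarySize w (A' ∪ S) - boundarySize w A') :
    PinchConvex w A' := by
  refine pinchConvex_iff_exists_take.mpr fun L hL => ?_
  obtain ⟨k, hk, hgt⟩ :=
    pinchConvex_iff_exists_take.mp hA L (by linarith [hgain L.toFinset])
  exact ⟨k, hk, by linarith [hgain (L.take k).toFinset]⟩

theorem PinchConvex.erase (hw0 : ∀ u v, 0 ≤ w u v) (hsym : ∀ u v, w u v = w v u)
    (hdiag : ∀ v, w v v = 0) (hA : PinchConvex w A) {v : V} (hv : v ∈ A)
    (hs : 0 ≤ pinchSlope w A v) : PinchConvex w (A.erase v) := by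
  refine hA.of_boundarySize_union_sub_le fun S => ?_
  have hAS : A ∪ S = insert v (A.erase v ∪ S) := by rw [← insert_union, insert_erase hv]
  rw [boundarySize_erase hsym hdiag hv, hAS]
  by_cases hvS : v ∈ A.erase v ∪ S
  · rw [insert_eq_self.mpr hvS]
    linarith
  · have := boundarySize_insert_sub_le hw0 hsym hdiag subset_union_left hvS
    rw [insert_erase hv, boundarySize_erase hsym hdiag hv] at this
    linarith

end Convexity

section Intersection

variable {w : V → V → ℝ} {A C C₁ C₂ : Finset V}

theorem boundarySize_union_take_sub_le (hw0 : ∀ u v, 0 ≤ w u v)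
    (hsym : ∀ u v, w u v = w v u) (hdiag : ∀ v, w v v = 0) (hAC : A ⊆ C) (L : List V)
    (hstep : ∀ k (hk : k < L.length), L[k] ∈ C →
      boundarySize w (A ∪ (L.take k).toFinset) ≤
        boundarySize w (A ∪ (L.take (k + 1)).toFinset)) :
    ∀ n ≤ L.length, boundarySize w (C ∪ (L.take n).toFinset) - boundarySize w C ≤
      boundarySize w (A ∪ (L.take n).toFinset) - boundarySize w A := by
  intro n
  induction n with
  | zero => simp
  | succ n ih =>
    intro hn
    have ih := ih (by omega)
    have hA := hstep n hn
    rw [List.toFinset_take_succ hn, union_insert] at hA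
    rw [List.toFinset_take_succ hn, union_insert, union_insert]
    by_cases hC : L[n] ∈ C
    · rw [insert_eq_self.mpr (mem_union_left _ hC)]
      linarith [hA hC]
    by_cases hT : L[n] ∈ (L.take n).toFinset
    · rw [insert_eq_self.mpr (mem_union_right _ hT), insert_eq_self.mpr (mem_union_right _ hT)]
      exact ih
    · linarith [boundarySize_insert_sub_le hw0 hsym hdiag
        (union_subset_union_left (t := (L.take n).toFinset) hAC) (v := L[n])
        fun h => (mem_union.mp h).elim hC hT]

theorem PinchConvex.false_of_flat_chain (hw0 : ∀ u v, 0 ≤ w u v) (hsym : ∀ u v, w u v = w v u)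
    (hdiag : ∀ v, w v v = 0) (hC : PinchConvex w C) (hAC : A ⊆ C) (L : List V)
    (hflat : ∀ k < L.length, boundarySize w (A ∪ (L.take k).toFinset) = boundarySize w A)
    (hlast : ∀ hL : L ≠ [], L.getLast hL ∉ C)
    (hdesc : boundarySize w (A ∪ L.toFinset) < boundarySize w A) : False := by
  have hgain := boundarySize_union_take_sub_le hw0 hsym hdiag hAC L fun k hk hkC => by
    have hk1 : k + 1 < L.length := by
      by_contra h
      refine hlast (List.ne_nil_of_length_pos (by omega)) ?_
      simpa [List.getLast_eq_getElem, show L.length - 1 = k by omega] using hkC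
    rw [hflat k hk, hflat (k + 1) hk1]
  obtain ⟨k, hk, hgt⟩ := pinchConvex_iff_exists_take.mp hC L
    (by linarith [List.take_length (l := L) ▸ hgain L.length le_rfl])
  linarith [hgain k hk.le, hflat k hk]

theorem PinchConvex.inter (hw0 : ∀ u v, 0 ≤ w u v) (hsym : ∀ u v, w u v = w v u)
    (hdiag : ∀ v, w v v = 0) (h₁ : PinchConvex w C₁) (h₂ : PinchConvex w C₂) :
    PinchConvex w (C₁ ∩ C₂) := by
  refine pinchConvex_iff_exists_take.mpr fun L => ?_
  induction hn : L.length using Nat.strong_induction_on generalizing L with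
  | _ n ih =>
    subst hn
    intro hdesc
    by_contra! hle
    have hflat : ∀ k < L.length,
        boundarySize w (C₁ ∩ C₂ ∪ (L.take k).toFinset) = boundarySize w (C₁ ∩ C₂) := by
      refine fun k hk => le_antisymm (hle k hk) (not_lt.mp fun hlt => ?_)
      obtain ⟨j, hj, hgt⟩ := ih k hk (L.take k) (List.length_take_of_le hk.le) hlt
      rw [List.take_take, min_eq_left hj.le] at hgt
      exact (hle j (hj.trans hk)).not_gt hgt
    have hne : L ≠ [] := by
      rintro rfl
      simp at hdesc
    have hlast : L.getLast hne ∉ C₁ ∩ C₂ := by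
      intro hx
      have hdrop := hflat (L.length - 1) (by simpa [List.length_pos_iff] using hne)
      have hunion :
          C₁ ∩ C₂ ∪ L.toFinset = C₁ ∩ C₂ ∪ (L.take (L.length - 1)).toFinset := by
        conv_lhs => rw [← List.dropLast_append_getLast hne]
        rw [List.dropLast_eq_take, List.toFinset_append, ← union_assoc, union_eq_left]
        simpa using Or.inl (mem_inter.mp hx)
      rw [hunion] at hdesc
      exact hdesc.ne hdrop
    rcases not_and_or.mp (mem_inter.not.mp hlast) with hx | hx
    · exact h₁.false_of_flat_chain hw0 hsym hdiag inter_subset_left L hflat (fun _ => hx)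
        hdesc
    · exact h₂.false_of_flat_chain hw0 hsym hdiag inter_subset_right L hflat (fun _ => hx)
        hdesc

end Intersection

section Cluster

variable {w : V → V → ℝ} {A : Finset V}

theorem exists_take_of_pinchSlope_neg (hsym : ∀ u v, w u v = w v u) (hdiag : ∀ v, w v v = 0)
    (hneg : ∀ v ∈ A, pinchSlope w A v < 0) : ∀ L : List V,
    boundarySize w (A \ L.toFinset) < boundarySize w A →
    ∃ k < L.length, boundarySize w A < boundarySize w (A \ (L.take k).toFinset)
  | [], h => by simp at h
  | a :: l, h => by
    by_cases ha : a ∈ A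
    · have hgt : boundarySize w A < boundarySize w (A \ {a}) := by
        rw [sdiff_singleton_eq_erase, boundarySize_erase hsym hdiag ha]
        linarith [hneg a ha]
      cases l with
      | nil => exact absurd h (by simpa using hgt.le)
      | cons b l => exact ⟨1, by simp, by simpa using hgt⟩
    · rw [List.toFinset_cons, sdiff_insert_of_notMem ha] at h
      obtain ⟨k, hk, hgt⟩ := exists_take_of_pinchSlope_neg hsym hdiag hneg l h
      exact ⟨k + 1, by simpa using hk,
        by rwa [List.take_succ_cons, List.toFinset_cons, sdiff_insert_of_notMem ha]⟩

theorem PinchConvex.pinchCluster (hsym : ∀ u v, w u v = w v u) (hdiag : ∀ v, w v v = 0)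
    (hA : PinchConvex w A) (hneg : ∀ v ∈ A, pinchSlope w A v < 0) : PinchCluster w A :=
  ⟨pinchConvex_iff_exists_take.mp hA, exists_take_of_pinchSlope_neg hsym hdiag hneg⟩

end Cluster

theorem middle_block_pinchCluster_general (w : V → V → ℝ)
    (hw0 : ∀ u v, 0 ≤ w u v) (hsym : ∀ u v, w u v = w v u)
    (hdiag : ∀ v, w v v = 0) (C₁ C₂ : Finset V)
    (hC₁ : PinchConvex w C₁) (hC₂ : PinchConvex w C₂)
    (B : ℕ → Finset V) (ℓ : ℕ) (hB0 : B 0 = C₁ ∩ C₂)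
    (hstep : ∀ t < ℓ, ∃ v ∈ B t, 0 ≤ pinchSlope w (B t) v ∧
      (∀ u ∈ B t, pinchSlope w (B t) u ≤ pinchSlope w (B t) v) ∧ B (t + 1) = (B t).erase v)
    (hterm : ∀ v ∈ B ℓ, pinchSlope w (B ℓ) v < 0) :
    PinchCluster w (B ℓ) := by
  have hconvex : ∀ t ≤ ℓ, PinchConvex w (B t) := by
    intro t
    induction t with
    | zero => exact fun _ => hB0 ▸ hC₁.inter hw0 hsym hdiag hC₂
    | succ t ih =>
      intro ht
      obtain ⟨v, hv, hs, -, hBt⟩ := hstep t ht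
      exact hBt ▸ (ih (by omega)).erase hw0 hsym hdiag hv hs
  exact (hconvex ℓ le_rfl).pinchCluster hsym hdiag hterm

/-- Lemma (middleclusterlem): if `B 0` is a middle block (the intersection of
two pinch convex sets) and `B (t+1)` is obtained from `B t` by removing a
vertex of maximal (nonnegative) slope, terminating at `B ℓ` in which every
vertex has strictly negative slope, then if `B ℓ` is non-empty it is a
pinch cluster. -/
theorem middle_block_pinchCluster (w : V → V → ℝ)
    (hw0 : ∀ u v, 0 ≤ w u v) (hsym : ∀ u v, w u v = w v u)
    (hdiag : ∀ v, w v v = 0) (C₁ C₂ : Finset V)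
    (hC₁ : PinchConvex w C₁) (hC₂ : PinchConvex w C₂)
    (B : ℕ → Finset V) (ℓ : ℕ) (hB0 : B 0 = C₁ ∩ C₂)
    (hstep : ∀ t < ℓ, ∃ v ∈ B t, 0 ≤ pinchSlope w (B t) v ∧
      (∀ u ∈ B t, pinchSlope w (B t) u ≤ pinchSlope w (B t) v) ∧ B (t + 1) = (B t).erase v)
    (hterm : ∀ v ∈ B ℓ, pinchSlope w (B ℓ) v < 0)
    (hne : (B ℓ).Nonempty) :
    PinchCluster w (B ℓ) :=
  middle_block_pinchCluster_general w hw0 hsym hdiag C₁ C₂ hC₁ hC₂ B ℓ hB0 hstep hterm
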